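/- Let L be a self-adjoint operator on a Hilbert space H₁ whose spectrum is contained in ℤ, and let N be a self-adjoint operator on a finite-dimensional Hilbert space H₂ whose spectrum is contained in {0,1,...,m}. Then the spectrum of L ⊗ 1 − (1/2)(1 ⊗ N) on H₁ ⊗ H₂ is contained in (1/2)ℤ. Consequently, if m is odd, −m/4 is not an eigenvalue of L ⊗ 1 − (1/2)(1 ⊗ N), so there is no nonzero vector ψ with (L ⊗ 1 − (1/2)(1 ⊗ N))ψ = −(m/4)ψ. -/

import Mathlib

open ContinuousLinearMap

section AuxLemmas

open Complex

variable {H : Type*} [NormedAddCommGroup H] [InnerProductSpace ℂ H] [CompleteSpace H]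


variable {H : Type*} [NormedAddCommGroup H] [InnerProductSpace ℂ H] [CompleteSpace H]

lemma aux_isStarNormal_smul (c : ℂ) {a : H →L[ℂ] H} (ha : IsSelfAdjoint a) :
    IsStarNormal (c • a) := by
  constructor
  rw [star_smul, ha.star_eq]
  exact ((Commute.refl a).smul_left _).smul_right _

lemma aux_exp_smul_eq_one (c : ℂ) {a : H →L[ℂ] H} (ha : IsSelfAdjoint a)
    (h : ∀ z ∈ spectrum ℂ a, Complex.exp (c * z) = 1) :
    NormedSpace.exp (c • a) = 1 := by
  have hn : IsStarNormal a := ha.isStarNormal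
  have hn2 : IsStarNormal (c • a) := aux_isStarNormal_smul c ha
  rw [← CFC.complex_exp_eq_normedSpace_exp hn2,
    ← cfc_comp_smul c Complex.exp a (by fun_prop) hn]
  calc cfc (fun z => Complex.exp (c • z)) a
      = cfc (fun _ : ℂ => (1 : ℂ)) a := by
        refine cfc_congr fun z hz => ?_
        simpa [smul_eq_mul] using h z hz
    _ = 1 := cfc_const_one ℂ a


end AuxLemmas

open Complex Real

/-- Operator-theoretic core of Theorem 2: if `L` is self-adjoint with spectrum in `ℤ` and
`N` is self-adjoint with spectrum in `{0,1,...,m}`, and `L` and `N` commute (as do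
`L ⊗ 1` and `1 ⊗ N` on a tensor product, here represented as commuting operators on one
Hilbert space), then the spectrum of `L − (1/2)N` is contained in `(1/2)ℤ`; consequently,
if `m` is odd, `−m/4` is not an eigenvalue of `L − (1/2)N`. -/
theorem spectrum_half_integer_and_no_eigenvector (H : Type*) [NormedAddCommGroup H]
    [InnerProductSpace ℂ H] [CompleteSpace H] (m : ℕ)
    (L N : H →L[ℂ] H)
    (hL : IsSelfAdjoint L) (hN : IsSelfAdjoint N)
    (hcomm : L ∘L N = N ∘L L)
    (hspecL : spectrum ℂ L ⊆ Set.range ((↑) : ℤ → ℂ))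
    (hspecN : spectrum ℂ N ⊆ {z : ℂ | ∃ k : ℕ, k ≤ m ∧ z = (k : ℂ)}) :
    spectrum ℂ (L - (1 / 2 : ℂ) • N) ⊆ {z : ℂ | ∃ k : ℤ, z = (k : ℂ) / 2} ∧
    (Odd m → ∀ ψ : H, (L - (1 / 2 : ℂ) • N) ψ = (-(m : ℂ) / 4) • ψ → ψ = 0) := by
  set A := L - (1 / 2 : ℂ) • N with hAdef
  have hA : IsSelfAdjoint A := by
    refine hL.sub ?_
    rw [IsSelfAdjoint, star_smul, hN.star_eq]
    norm_num
  set c : ℂ := 4 * π * Complex.I with hc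
  have hπ : (π : ℂ) ≠ 0 := Complex.ofReal_ne_zero.mpr Real.pi_ne_zero
  have hcne : c ≠ 0 := by
    simp [hc, Complex.I_ne_zero, hπ]
  -- exp (c • A) = 1
  have hsplit : c • A = c • L + (-(c / 2)) • N := by
    rw [hAdef]
    module
  have hcommute : Commute (c • L) ((-(c / 2)) • N) := by
    have : Commute L N := hcomm
    exact (this.smul_left c).smul_right _
  have hexpL : NormedSpace.exp (c • L) = 1 := by
    refine aux_exp_smul_eq_one c hL fun z hz => ?_
    obtain ⟨n, rfl⟩ := hspecL hz
    rw [Complex.exp_eq_one_iff]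
    exact ⟨2 * n, by push_cast; ring⟩
  have hexpN : NormedSpace.exp ((-(c / 2)) • N) = 1 := by
    refine aux_exp_smul_eq_one _ hN fun z hz => ?_
    obtain ⟨k, -, rfl⟩ := hspecN hz
    rw [Complex.exp_eq_one_iff]
    exact ⟨-k, by push_cast [hc]; ring⟩
  have hexpA : NormedSpace.exp (c • A) = 1 := by
    letI : NormedAlgebra ℚ (H →L[ℂ] H) := .restrictScalars ℚ ℂ (H →L[ℂ] H)
    rw [hsplit, NormedSpace.exp_add_of_commute hcommute, hexpL, hexpN, one_mul]
  -- spectrum inclusion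
  have hspec : spectrum ℂ A ⊆ {z : ℂ | ∃ k : ℤ, z = (k : ℂ) / 2} := by
    intro μ hμ
    have hcμ : c * μ ∈ spectrum ℂ (c • A) := by
      have h := spectrum.unit_smul_eq_smul A (Units.mk0 c hcne)
      rw [Units.smul_mk0] at h
      rw [h]
      exact ⟨μ, hμ, rfl⟩
    have hmem := spectrum.exp_mem_exp (c • A) hcμ
    rw [hexpA, ← Complex.exp_eq_exp_ℂ] at hmem
    have hexp1 : Complex.exp (c * μ) = 1 := by
      by_contra hne
      have : IsUnit (algebraMap ℂ (H →L[ℂ] H) (Complex.exp (c * μ)) - 1) := by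
        rw [← map_one (algebraMap ℂ (H →L[ℂ] H)), ← map_sub]
        exact (IsUnit.mk0 _ (sub_ne_zero.mpr hne)).map _
      exact (spectrum.mem_iff.mp hmem) this
    obtain ⟨k, hk⟩ := Complex.exp_eq_one_iff.mp hexp1
    refine ⟨k, ?_⟩
    have h2 : (2 * π * Complex.I) * (2 * μ) = (2 * π * Complex.I) * k := by
      rw [hc] at hk; linear_combination hk
    have := mul_left_cancel₀ (by simp [Complex.I_ne_zero, hπ]) h2
    linear_combination this / 2
  refine ⟨hspec, fun hodd ψ hψ => ?_⟩
  by_contra hψ0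
  have hμspec : (-(m : ℂ) / 4) ∈ spectrum ℂ A := by
    rw [spectrum.mem_iff]
    intro hu
    obtain ⟨u, hu⟩ := hu
    have happ : (algebraMap ℂ (H →L[ℂ] H) (-(m : ℂ) / 4) - A) ψ = 0 := by
      simp [ContinuousLinearMap.sub_apply, hψ, Algebra.algebraMap_eq_smul_one,
        ContinuousLinearMap.smul_apply]
    apply hψ0
    calc ψ = ((↑u⁻¹ * ↑u : H →L[ℂ] H)) ψ := by rw [u.inv_mul]; simp
      _ = (↑u⁻¹ : H →L[ℂ] H) ((↑u : H →L[ℂ] H) ψ) := ContinuousLinearMap.mul_apply _ _ _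
      _ = 0 := by rw [hu, happ, map_zero]
  obtain ⟨k, hk⟩ := hspec hμspec
  have : (m : ℂ) = -(2 * k) := by linear_combination (-4 : ℂ) * hk
  have hmk : (m : ℤ) = -(2 * k) := by exact_mod_cast this
  have : Even (m : ℤ) := ⟨-k, by omega⟩
  rw [Int.even_coe_nat] at this
  exact (Nat.not_even_iff_odd.mpr hodd) this
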